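/- arXiv:1805.09805 — 2 statements merged into one kernel-verified Lean document; each statement's English description precedes it below -/
import Mathlib

section
/- Let A be an associative F-algebra containing a non-zero finite-dimensional semisimple subalgebra S. Then the following are equivalent: (i) A is S-modgenerated, i.e. A is generated as an algebra by its non-trivial simple S-sub-bimodules; (iii) the smallest two-sided ideal of A containing S equals A. -/
/-!
If `J` is an ideal containing `S` and `W` is a non-trivial simple `S`-sub-bimodule, then `W ∩ J`
is a sub-bimodule of `W` containing a non-zero element of `SW + WS`, so `W ⊆ J`; hence the
modgenerated subalgebra `B` lies in every ideal containing `S`.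

Conversely, fix matrix units `E i k l` of `S` and let `e = ∑ E i p p` be the unit of `S`. For any
`a`, each of the families `p ↦ E i p l * (a - a * e)`, `p ↦ (a - e * a) * E i l p` and
`(p, q) ↦ E i p l * a * E j r q` spans a simple `S`-sub-bimodule, because matrix units move any
non-zero element of the span onto every member of the family. Writing
`E * a = E * (a - a * e) + E * a * e` (and symmetrically) puts `SA`, `AS`, `S` and `ASA` into `B`,
so the ideal generated by `S` lies in `B`.
-/

universe u v

/-- A non-unital `F`-algebra is (finite-dimensional) semisimple iff it is isomorphic,
as a non-unital `F`-algebra, to a finite direct sum of full matrix algebras over `F`. -/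
def IsMatrixSemisimple (F : Type u) (S : Type v) [Field F] [NonUnitalRing S]
    [Module F S] : Prop :=
  ∃ (m : ℕ) (n : Fin m → ℕ) (_hn : ∀ i, 0 < n i)
    (f : S →ₙₐ[F] ∀ i, Matrix (Fin (n i)) (Fin (n i)) F), Function.Bijective f

variable (F : Type u) {A : Type v} [Field F] [NonUnitalRing A] [Module F A]
  [SMulCommClass F A A] [IsScalarTower F A A]

/-- `W` is an `S`-sub-bimodule (of `A`): an `F`-subspace with `SW + WS ⊆ W`. -/
def IsSubBimod (S : NonUnitalSubalgebra F A) (W : Submodule F A) : Prop :=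
  ∀ s ∈ S, ∀ w ∈ W, s * w ∈ W ∧ w * s ∈ W

/-- The non-trivial simple `S`-sub-bimodules contained in a subset `B` of `A`. -/
def SimpleBimods (S : NonUnitalSubalgebra F A) (B : Set A) : Set (Submodule F A) :=
  {W | (W : Set A) ⊆ B ∧ W ≠ ⊥ ∧ IsSubBimod F S W ∧
    -- non-trivial: `SW + WS ≠ 0`
    (∃ s ∈ S, ∃ w ∈ W, s * w ≠ 0 ∨ w * s ≠ 0) ∧
    -- simple: the only `S`-sub-bimodules of `W` are `0` and `W`
    (∀ W' : Submodule F A, W' ≤ W → IsSubBimod F S W' → W' = ⊥ ∨ W' = W)}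

/-- The subalgebra generated by the non-trivial simple `S`-sub-bimodules of `B`
(denoted `B_S` in the paper). -/
def modGenSubalg (S : NonUnitalSubalgebra F A) (B : Set A) : NonUnitalSubalgebra F A :=
  NonUnitalAlgebra.adjoin F (⋃ W ∈ SimpleBimods F S B, (W : Set A))

section

open Submodule Set

variable {F}

omit [SMulCommClass F A A] [IsScalarTower F A A]

theorem le_of_mem_simpleBimods {S : NonUnitalSubalgebra F A} {J : Submodule F A}
    (hJ : ∀ a : A, ∀ x ∈ J, a * x ∈ J ∧ x * a ∈ J) (hSJ : (S : Set A) ⊆ J)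
    {B : Set A} {W : Submodule F A} (hW : W ∈ SimpleBimods F S B) : W ≤ J := by
  obtain ⟨-, -, hbi, ⟨s, hs, w, hw, hsw⟩, hsimple⟩ := hW
  have hbi' : IsSubBimod F S (W ⊓ J) := fun t ht x hx =>
    ⟨⟨(hbi t ht x hx.1).1, (hJ t x hx.2).1⟩, ⟨(hbi t ht x hx.1).2, (hJ t x hx.2).2⟩⟩
  have hne : W ⊓ J ≠ ⊥ := by
    rw [Submodule.ne_bot_iff]
    rcases hsw with h | h
    · exact ⟨s * w, ⟨(hbi s hs w hw).1, (hJ w s (hSJ hs)).2⟩, h⟩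
    · exact ⟨w * s, ⟨(hbi s hs w hw).2, (hJ w s (hSJ hs)).1⟩, h⟩
  rw [← (hsimple _ inf_le_left hbi').resolve_left hne]
  exact inf_le_right

theorem span_range_mem_simpleBimods {S : NonUnitalSubalgebra F A} {ι : Type*}
    [Fintype ι] [DecidableEq ι] (w : ι → A) (hbi : IsSubBimod F S (span F (range w)))
    (hfix : ∀ p, ∃ s ∈ S, s * w p = w p ∨ w p * s = w p)
    (htrans : ∀ p₁ q, ∃ φ : A →ₗ[F] A, (∀ W, IsSubBimod F S W → ∀ x ∈ W, φ x ∈ W) ∧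
      ∀ p, φ (w p) = if p = p₁ then w q else 0)
    {p₀ : ι} (hp₀ : w p₀ ≠ 0) :
    span F (range w) ∈ SimpleBimods F S univ := by
  have hw₀ : w p₀ ∈ span F (range w) := subset_span ⟨p₀, rfl⟩
  obtain ⟨s, hs, hsw⟩ := hfix p₀
  refine ⟨subset_univ _, (Submodule.ne_bot_iff _).2 ⟨_, hw₀, hp₀⟩, hbi,
    ⟨s, hs, _, hw₀, hsw.imp (fun h => by rwa [h]) (fun h => by rwa [h])⟩, fun W hle hW => ?_⟩
  refine (eq_or_ne W ⊥).imp_right fun hne => le_antisymm hle (span_le.2 ?_)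
  obtain ⟨u, hu, hu0⟩ := (Submodule.ne_bot_iff W).1 hne
  obtain ⟨c, rfl⟩ := (mem_span_range_iff_exists_fun F).1 (hle hu)
  obtain ⟨p₁, hc⟩ : ∃ p₁, c p₁ ≠ 0 := by
    by_contra! h
    simp [h] at hu0
  rintro _ ⟨q, rfl⟩
  obtain ⟨φ, hφW, hφw⟩ := htrans p₁ q
  have hφu : φ (∑ p, c p • w p) = c p₁ • w q := by simp [map_sum, hφw]
  have h := W.smul_mem (c p₁)⁻¹ (hφW W hW _ hu)
  rwa [hφu, smul_smul, inv_mul_cancel₀ hc, one_smul] at h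

structure MatrixUnits (S : NonUnitalSubalgebra F A) where
  m : ℕ
  n : Fin m → ℕ
  E : (i : Fin m) → Fin (n i) → Fin (n i) → A
  mem : ∀ i k l, E i k l ∈ S
  mul_same : ∀ i (k l l' r : Fin (n i)), E i k l * E i l' r = if l = l' then E i k r else 0
  mul_diff : ∀ i j, i ≠ j → ∀ (k l : Fin (n i)) (k' l' : Fin (n j)), E i k l * E j k' l' = 0
  le_span : S.toSubmodule ≤
    span F (range fun x : Σ i : Fin m, Fin (n i) × Fin (n i) => E x.1 x.2.1 x.2.2)

theorem MatrixUnits.nonempty_of_isMatrixSemisimple {S : NonUnitalSubalgebra F A}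
    (h : IsMatrixSemisimple F S) : Nonempty (MatrixUnits S) := by
  obtain ⟨m, n, -, f, hf⟩ := h
  let g := LinearEquiv.ofBijective (f : S →ₗ[F] ∀ i, Matrix (Fin (n i)) (Fin (n i)) F) hf
  have hg : ∀ x y, (g.symm (x * y) : A) = g.symm x * g.symm y := fun x y => by
    rw [← MulMemClass.coe_mul]
    congr 1
    apply g.injective
    have hfg : ∀ z, f (g.symm z) = z := g.apply_symm_apply
    rw [g.apply_symm_apply]
    change _ = f _
    rw [map_mul, hfg, hfg]
  let φ : _ →ₗ[F] A := S.toSubmodule.subtype ∘ₗ g.symm.toLinearMap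
  let b := Pi.basis fun i => Matrix.stdBasis F (Fin (n i)) (Fin (n i))
  refine ⟨⟨m, n, fun i k l => g.symm (Pi.single i (Matrix.single k l 1)),
    fun _ _ _ => SetLike.coe_mem _, fun i k l l' r => ?_, fun i j hij k l k' l' => ?_, ?_⟩⟩
  · rw [← hg, ← Pi.single_mul]
    split_ifs with h
    · rw [h, Matrix.single_mul_single_same, one_mul]
    · rw [Matrix.single_mul_single_of_ne (h := h)]; simp
  · rw [← hg, ← Pi.single_mul_left, Pi.single_eq_of_ne hij, mul_zero, Pi.single_zero, map_zero,
      ZeroMemClass.coe_zero]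
  · intro s hs
    have hφ : φ (g ⟨s, hs⟩) ∈ (span F (range b)).map φ :=
      mem_map_of_mem (b.span_eq ▸ mem_top)
    rw [map_span, ← range_comp] at hφ
    convert hφ using 3
    · funext ⟨i, k, l⟩
      simp [φ, b, Pi.basis_apply, Matrix.stdBasis_eq_single]
    · simp [φ]

namespace MatrixUnits

variable {S : NonUnitalSubalgebra F A} (U : MatrixUnits S)

theorem mem_of_forall_E_mem {V : Submodule F A} (h : ∀ i k l, U.E i k l ∈ V) {s : A}
    (hs : s ∈ S) : s ∈ V :=
  span_le.2 (by rintro _ ⟨⟨i, k, l⟩, rfl⟩; exact h i k l) (U.le_span hs)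

theorem exists_E_mul_E_eq_smul (j : Fin U.m) (k' l' : Fin (U.n j)) (i : Fin U.m)
    (p l : Fin (U.n i)) : ∃ c : F, ∃ p', U.E j k' l' * U.E i p l = c • U.E i p' l := by
  by_cases hji : j = i
  · subst hji
    rw [U.mul_same]
    split_ifs
    · exact ⟨1, k', (one_smul _ _).symm⟩
    · exact ⟨0, p, (zero_smul _ _).symm⟩
  · exact ⟨0, p, by rw [U.mul_diff j i hji, zero_smul]⟩

theorem exists_E_mul_E_eq_smul' (i : Fin U.m) (l q : Fin (U.n i)) (j : Fin U.m)
    (k' l' : Fin (U.n j)) : ∃ c : F, ∃ q', U.E i l q * U.E j k' l' = c • U.E i l q' := by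
  by_cases hij : i = j
  · subst hij
    rw [U.mul_same]
    split_ifs
    · exact ⟨1, l', (one_smul _ _).symm⟩
    · exact ⟨0, q, (zero_smul _ _).symm⟩
  · exact ⟨0, q, by rw [U.mul_diff i j hij, zero_smul]⟩

def one : A := ∑ i, ∑ p, U.E i p p

theorem E_mul_one (i : Fin U.m) (k l : Fin (U.n i)) : U.E i k l * U.one = U.E i k l := by
  rw [one, Finset.mul_sum, Finset.sum_eq_single i]
  · simp [Finset.mul_sum, U.mul_same]
  · exact fun j _ hj => (Finset.mul_sum ..).trans <|
      Finset.sum_eq_zero fun p _ => U.mul_diff i j (Ne.symm hj) _ _ _ _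
  · simp

theorem one_mul_E (i : Fin U.m) (k l : Fin (U.n i)) : U.one * U.E i k l = U.E i k l := by
  rw [one, Finset.sum_mul, Finset.sum_eq_single i]
  · simp [Finset.sum_mul, U.mul_same]
  · exact fun j _ hj => (Finset.sum_mul ..).trans <|
      Finset.sum_eq_zero fun p _ => U.mul_diff j i hj _ _ _ _
  · simp

end MatrixUnits

end

section

open Submodule Set

variable {F}

theorem mem_modGenSubalg_of_mem_simpleBimods {S : NonUnitalSubalgebra F A}
    {W : Submodule F A} (hW : W ∈ SimpleBimods F S univ) {x : A} (hx : x ∈ W) :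
    x ∈ modGenSubalg F S univ :=
  NonUnitalAlgebra.subset_adjoin F (mem_biUnion hW hx)

theorem mem_of_mem_modGenSubalg {S : NonUnitalSubalgebra F A} {J : Submodule F A}
    (hJ : ∀ a : A, ∀ x ∈ J, a * x ∈ J ∧ x * a ∈ J) (hSJ : (S : Set A) ⊆ J)
    {x : A} (hx : x ∈ modGenSubalg F S univ) : x ∈ J := by
  induction hx using NonUnitalAlgebra.adjoin_induction with
  | mem x hx =>
    obtain ⟨W, hW, hxW⟩ := mem_iUnion₂.1 hx
    exact le_of_mem_simpleBimods hJ hSJ hW hxW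
  | add x y _ _ hx hy => exact J.add_mem hx hy
  | zero => exact J.zero_mem
  | mul x y _ _ _ hy => exact (hJ x y hy).1
  | smul c x _ hx => exact J.smul_mem c hx

theorem mem_modGenSubalg_of_span_range {S : NonUnitalSubalgebra F A} {ι : Type*}
    [Fintype ι] [DecidableEq ι] (w : ι → A) (hbi : IsSubBimod F S (span F (range w)))
    (hfix : ∀ p, ∃ s ∈ S, s * w p = w p ∨ w p * s = w p)
    (htrans : ∀ p₁ q, ∃ φ : A →ₗ[F] A, (∀ W, IsSubBimod F S W → ∀ x ∈ W, φ x ∈ W) ∧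
      ∀ p, φ (w p) = if p = p₁ then w q else 0) (p : ι) :
    w p ∈ modGenSubalg F S univ := by
  by_cases h : ∃ p₀, w p₀ ≠ 0
  · obtain ⟨p₀, hp₀⟩ := h
    exact mem_modGenSubalg_of_mem_simpleBimods
      (span_range_mem_simpleBimods w hbi hfix htrans hp₀) (subset_span ⟨p, rfl⟩)
  · simp only [not_exists, not_not] at h
    rw [h p]
    exact zero_mem _

/-- The largest two-sided ideal of `A` contained in `V`. -/
def idealCore (V : Submodule F A) : Submodule F A :=
  V ⊓ (⨅ a, V.comap (LinearMap.mulLeft F a)) ⊓ (⨅ a, V.comap (LinearMap.mulRight F a)) ⊓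
    ⨅ a, ⨅ b, V.comap (LinearMap.mulRight F b ∘ₗ LinearMap.mulLeft F a)

theorem mem_idealCore {V : Submodule F A} {x : A} :
    x ∈ idealCore V ↔ x ∈ V ∧ (∀ a, a * x ∈ V) ∧ (∀ a, x * a ∈ V) ∧ ∀ a b, a * x * b ∈ V := by
  simp [idealCore, and_assoc]

theorem idealCore_isIdeal (V : Submodule F A) :
    ∀ a : A, ∀ x ∈ idealCore V, a * x ∈ idealCore V ∧ x * a ∈ idealCore V := by
  simp only [mem_idealCore]
  rintro a x ⟨-, hl, hr, hlr⟩
  refine ⟨⟨hl a, fun b => ?_, hlr a, fun b c => ?_⟩,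
    ⟨hr a, fun b => ?_, fun b => ?_, fun b c => ?_⟩⟩
  · simpa only [mul_assoc] using hl (b * a)
  · simpa only [mul_assoc] using hlr (b * a) c
  · simpa only [mul_assoc] using hlr b a
  · simpa only [mul_assoc] using hr (a * b)
  · simpa only [mul_assoc] using hlr b (a * c)

namespace MatrixUnits

variable {S : NonUnitalSubalgebra F A} (U : MatrixUnits S)

theorem isSubBimod_span_range {ι : Type*} (w : ι → A)
    (hl : ∀ i k l p, U.E i k l * w p ∈ span F (range w))
    (hr : ∀ i k l p, w p * U.E i k l ∈ span F (range w)) :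
    IsSubBimod F S (span F (range w)) := by
  set W := span F (range w)
  have hL : ∀ i k l, W ≤ W.comap (LinearMap.mulLeft F (U.E i k l)) := fun i k l =>
    span_le.2 (by rintro _ ⟨p, rfl⟩; exact hl i k l p)
  have hR : ∀ i k l, W ≤ W.comap (LinearMap.mulRight F (U.E i k l)) := fun i k l =>
    span_le.2 (by rintro _ ⟨p, rfl⟩; exact hr i k l p)
  intro s hs x hx
  exact ⟨U.mem_of_forall_E_mem (V := W.comap (LinearMap.mulRight F x)) (hL · · · hx) hs,
    U.mem_of_forall_E_mem (V := W.comap (LinearMap.mulLeft F x)) (hR · · · hx) hs⟩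

omit [IsScalarTower F A A] in
theorem one_mul_of_mem {s : A} (hs : s ∈ S) : U.one * s = s :=
  U.mem_of_forall_E_mem (V := LinearMap.eqLocus (LinearMap.mulLeft F U.one) LinearMap.id)
    U.one_mul_E hs

omit [SMulCommClass F A A] in
theorem mul_one_of_mem {s : A} (hs : s ∈ S) : s * U.one = s :=
  U.mem_of_forall_E_mem (V := LinearMap.eqLocus (LinearMap.mulRight F U.one) LinearMap.id)
    U.E_mul_one hs

theorem E_mul_mem_of_mul_eq_zero {b : A} (hb : ∀ s ∈ S, b * s = 0) (i : Fin U.m)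
    (k l : Fin (U.n i)) : U.E i k l * b ∈ modGenSubalg F S univ := by
  refine mem_modGenSubalg_of_span_range (fun p => U.E i p l * b)
    (U.isSubBimod_span_range _ (fun j k' l' p => ?_) (fun j k' l' p => ?_))
    (fun p => ⟨U.E i p p, U.mem i p p, Or.inl ?_⟩)
    (fun p₁ q => ⟨LinearMap.mulLeft F (U.E i q p₁),
      fun W hW x hx => (hW _ (U.mem i q p₁) x hx).1, fun p => ?_⟩) k
  · obtain ⟨c, p', h⟩ := U.exists_E_mul_E_eq_smul j k' l' i p l
    rw [← mul_assoc, h, smul_mul_assoc]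
    exact smul_mem _ c (subset_span ⟨p', rfl⟩)
  · rw [mul_assoc, hb _ (U.mem j k' l'), mul_zero]
    exact zero_mem _
  · rw [← mul_assoc, U.mul_same, if_pos rfl]
  · simp [← mul_assoc, U.mul_same, eq_comm]

theorem mul_E_mem_of_mul_eq_zero {b : A} (hb : ∀ s ∈ S, s * b = 0) (i : Fin U.m)
    (k l : Fin (U.n i)) : b * U.E i k l ∈ modGenSubalg F S univ := by
  refine mem_modGenSubalg_of_span_range (fun p => b * U.E i k p)
    (U.isSubBimod_span_range _ (fun j k' l' p => ?_) (fun j k' l' p => ?_))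
    (fun p => ⟨U.E i p p, U.mem i p p, Or.inr ?_⟩)
    (fun p₁ q => ⟨LinearMap.mulRight F (U.E i p₁ q),
      fun W hW x hx => (hW _ (U.mem i p₁ q) x hx).2, fun p => ?_⟩) l
  · rw [← mul_assoc, hb _ (U.mem j k' l'), zero_mul]
    exact zero_mem _
  · obtain ⟨c, q', h⟩ := U.exists_E_mul_E_eq_smul' i k p j k' l'
    rw [mul_assoc, h, mul_smul_comm]
    exact smul_mem _ c (subset_span ⟨q', rfl⟩)
  · rw [mul_assoc, U.mul_same, if_pos rfl]
  · simp [mul_assoc, U.mul_same]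

theorem E_mul_mul_E_mem (a : A) (i : Fin U.m) (k l : Fin (U.n i)) (j : Fin U.m)
    (r q : Fin (U.n j)) : U.E i k l * a * U.E j r q ∈ modGenSubalg F S univ := by
  refine mem_modGenSubalg_of_span_range (fun p => U.E i p.1 l * a * U.E j r p.2)
    (U.isSubBimod_span_range _ (fun j' k' l' p => ?_) (fun j' k' l' p => ?_))
    (fun p => ⟨U.E i p.1 p.1, U.mem i p.1 p.1, Or.inl ?_⟩)
    (fun p₁ q' =>
      ⟨LinearMap.mulLeft F (U.E i q'.1 p₁.1) ∘ₗ LinearMap.mulRight F (U.E j p₁.2 q'.2),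
        fun W hW x hx => (hW _ (U.mem i _ _) _ (hW _ (U.mem j _ _) x hx).2).1, fun p => ?_⟩)
    (k, q)
  · obtain ⟨c, p', h⟩ := U.exists_E_mul_E_eq_smul j' k' l' i p.1 l
    rw [← mul_assoc, ← mul_assoc, h, smul_mul_assoc, smul_mul_assoc]
    exact smul_mem _ c (subset_span ⟨(p', p.2), rfl⟩)
  · obtain ⟨c, q', h⟩ := U.exists_E_mul_E_eq_smul' j r p.2 j' k' l'
    rw [mul_assoc, h, mul_smul_comm]
    exact smul_mem _ c (subset_span ⟨(p.1, q'), rfl⟩)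
  · rw [← mul_assoc, ← mul_assoc, U.mul_same, if_pos rfl]
  · simp only [LinearMap.comp_apply, LinearMap.mulLeft_apply, LinearMap.mulRight_apply]
    rw [mul_assoc _ (U.E j r p.2), U.mul_same, ← mul_assoc, ← mul_assoc, U.mul_same]
    obtain ⟨p₁, p₂⟩ := p₁
    obtain ⟨p, p'⟩ := p
    split_ifs <;> simp_all [eq_comm]

theorem E_mul_mem (i : Fin U.m) (k l : Fin (U.n i)) (a : A) :
    U.E i k l * a ∈ modGenSubalg F S univ := by
  have h : U.E i k l * a =
      U.E i k l * (a - a * U.one) + ∑ j, ∑ p, U.E i k l * a * U.E j p p := by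
    simp [mul_sub, one, Finset.mul_sum, mul_assoc]
  rw [h]
  refine add_mem (U.E_mul_mem_of_mul_eq_zero (fun s hs => ?_) i k l)
    (sum_mem fun j _ => sum_mem fun p _ => U.E_mul_mul_E_mem a i k l j p p)
  rw [sub_mul, mul_assoc, U.one_mul_of_mem hs, sub_self]

theorem mul_E_mem (i : Fin U.m) (k l : Fin (U.n i)) (a : A) :
    a * U.E i k l ∈ modGenSubalg F S univ := by
  have h : a * U.E i k l =
      (a - U.one * a) * U.E i k l + ∑ j, ∑ p, U.E j p p * a * U.E i k l := by
    simp [sub_mul, one, Finset.sum_mul]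
  rw [h]
  refine add_mem (U.mul_E_mem_of_mul_eq_zero (fun s hs => ?_) i k l)
    (sum_mem fun j _ => sum_mem fun p _ => U.E_mul_mul_E_mem a j p p i k l)
  rw [mul_sub, ← mul_assoc, U.mul_one_of_mem hs, sub_self]

end MatrixUnits

theorem subset_idealCore_modGenSubalg {S : NonUnitalSubalgebra F A}
    (hS : IsMatrixSemisimple F S) :
    (S : Set A) ⊆ idealCore (modGenSubalg F S univ).toSubmodule := by
  obtain ⟨U⟩ := MatrixUnits.nonempty_of_isMatrixSemisimple hS
  refine fun s hs => U.mem_of_forall_E_mem (fun i k l => mem_idealCore.2 ?_) hs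
  have hE : U.E i k l = U.E i k l * U.E i l l := by rw [U.mul_same, if_pos rfl]
  refine ⟨?_, U.mul_E_mem i k l, U.E_mul_mem i k l, fun a b => ?_⟩
  · rw [hE]; exact U.E_mul_mem i k l _
  · rw [hE, ← mul_assoc, mul_assoc]
    exact (modGenSubalg F S univ).mul_mem (U.mul_E_mem i k l a) (U.E_mul_mem i l l b)

end

theorem modGenerated_iff_ideal_generated
    (S : NonUnitalSubalgebra F A) (hS_ss : IsMatrixSemisimple F S) :
    modGenSubalg F S (Set.univ : Set A) = ⊤ ↔
      (∀ J : Submodule F A, (∀ a : A, ∀ x ∈ J, a * x ∈ J ∧ x * a ∈ J) →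
        (S : Set A) ⊆ J → J = ⊤) := by
  constructor
  · intro htop J hJ hSJ
    refine eq_top_iff.2 fun x _ => mem_of_mem_modGenSubalg hJ hSJ ?_
    rw [htop]
    trivial
  · intro h
    have hcore := h _ (idealCore_isIdeal _) (subset_idealCore_modGenSubalg hS_ss)
    exact eq_top_iff.2 fun x _ => (mem_idealCore.1 (hcore ▸ Submodule.mem_top : x ∈ _)).1
end

section
/- In the matrix-decomposition setting below, for every i ∈ I one has [L, V_ii ⊗ Λ(i,i)] ⊆ L, i.e. the commutator of any element of L with any element of V_ii ⊗ Λ(i,i) lies in L. -/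
/-! Statement 13: in the matrix-decomposition setting, `[L, V_ii ⊗ Λ(i,i)] ⊆ L` for all `i ∈ I`. -/

open scoped TensorProduct DirectSum

universe u v w

/-- `n` extended to `Î = I ∪ {0}` (`none` playing the role of `0`), with `n_0 = 1`. -/
abbrev nopt {I : Type} (n : I → ℕ) : Option I → ℕ
  | none => 1
  | some i => n i

variable (F : Type u) [Field F] [IsAlgClosed F]
  {I : Type} [Fintype I] [DecidableEq I] [Nonempty I] {n : I → ℕ}
  {Λ : Option I → Option I → Type v}
  [∀ i j, AddCommGroup (Λ i j)] [∀ i j, Module F (Λ i j)]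
  {A : Type w} [NonUnitalRing A] [Module F A] [SMulCommClass F A A] [IsScalarTower F A A]

/-- The image in `A` of an element `u ∈ V_ij ⊗ Λ(i,j)` under the identification `ψ`
of `A` with `⊕_{i,j ∈ Î} V_ij ⊗ Λ(i,j)`. -/
noncomputable def emb (ψ : (⨁ p : Option I × Option I,
      Matrix (Fin (nopt n p.1)) (Fin (nopt n p.2)) F ⊗[F] Λ p.1 p.2) ≃ₗ[F] A)
    (p : Option I × Option I)
    (u : Matrix (Fin (nopt n p.1)) (Fin (nopt n p.2)) F ⊗[F] Λ p.1 p.2) : A :=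
  ψ (DirectSum.lof F (Option I × Option I)
    (fun q => Matrix (Fin (nopt n q.1)) (Fin (nopt n q.2)) F ⊗[F] Λ q.1 q.2) p u)

/-- The image in `A` of a pure tensor `X ⊗ a ∈ V_ij ⊗ Λ(i,j)`. -/
noncomputable def elt (ψ : (⨁ p : Option I × Option I,
      Matrix (Fin (nopt n p.1)) (Fin (nopt n p.2)) F ⊗[F] Λ p.1 p.2) ≃ₗ[F] A)
    (i j : Option I) (X : Matrix (Fin (nopt n i)) (Fin (nopt n j)) F) (a : Λ i j) : A :=
  emb F ψ (i, j) (X ⊗ₜ a)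

/-- The union of the subspaces `V'_ij ⊗ Λ(i,j)`, `(i,j) ≠ (0,0)`, where `V'_ii` consists
of the trace-zero matrices and `V'_ij = V_ij` for `i ≠ j`. -/
def lieGens (ψ : (⨁ p : Option I × Option I,
      Matrix (Fin (nopt n p.1)) (Fin (nopt n p.2)) F ⊗[F] Λ p.1 p.2) ≃ₗ[F] A) : Set A :=
  {x | ∃ (i j : Option I) (X : Matrix (Fin (nopt n i)) (Fin (nopt n j)) F) (a : Λ i j),
      i ≠ j ∧ x = elt F ψ i j X a} ∪
  {x | ∃ (i : I) (X : Matrix (Fin (n i)) (Fin (n i)) F) (a : Λ (some i) (some i)),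
      Matrix.trace X = 0 ∧ x = elt F ψ (some i) (some i) X a}

/-- `L`: the Lie subalgebra of `A` (as a subspace closed under commutators) generated by
the subspaces `V'_ij ⊗ Λ(i,j)` over all `(i,j) ≠ (0,0)`. -/
def Lsub (ψ : (⨁ p : Option I × Option I,
      Matrix (Fin (nopt n p.1)) (Fin (nopt n p.2)) F ⊗[F] Λ p.1 p.2) ≃ₗ[F] A) :
    Submodule F A :=
  sInf {J : Submodule F A | lieGens F ψ ⊆ J ∧ ∀ x ∈ J, ∀ y ∈ J, x * y - y * x ∈ J}

variable (mu : ∀ i j k : Option I, Λ i j →ₗ[F] Λ j k →ₗ[F] Λ i k)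
  (ψ : (⨁ p : Option I × Option I,
      Matrix (Fin (nopt n p.1)) (Fin (nopt n p.2)) F ⊗[F] Λ p.1 p.2) ≃ₗ[F] A)

/-! Since `ad e` is a derivation, the elements of `L` whose bracket with `e` lies in `L` form a
subspace closed under brackets, so it suffices to bracket the generators of `L` with pure
tensors `Y ⊗ b ∈ V_ii ⊗ Λ(i,i)`. An off-diagonal generator yields off-diagonal blocks, which are
generators again. For diagonal blocks, trace-zero corrections reduce everything to
`E_zz ⊗ [a, b]`, which is a bracket of two off-diagonal matrix units modulo a trace-zero term. -/

section

omit [IsAlgClosed F] [Fintype I] [Nonempty I] [SMulCommClass F A A] [IsScalarTower F A A]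

def BlockProduct : Prop :=
  ∀ (i j k : Option I) (X : Matrix (Fin (nopt n i)) (Fin (nopt n j)) F)
    (a : Λ i j) (Y : Matrix (Fin (nopt n j)) (Fin (nopt n k)) F) (b : Λ j k),
    elt F ψ i j X a * elt F ψ j k Y b = elt F ψ i k (X * Y) (mu i j k a b)

def BlockOrthogonal : Prop :=
  ∀ (i j s t : Option I), j ≠ s →
    ∀ (X : Matrix (Fin (nopt n i)) (Fin (nopt n j)) F) (a : Λ i j)
      (Y : Matrix (Fin (nopt n s)) (Fin (nopt n t)) F) (b : Λ s t),
    elt F ψ i j X a * elt F ψ s t Y b = 0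

section Linearity

variable {i j : Option I}

lemma emb_zero (p : Option I × Option I) : emb F ψ p 0 = 0 := by
  simp [emb]

lemma emb_add (p : Option I × Option I)
    (u v : Matrix (Fin (nopt n p.1)) (Fin (nopt n p.2)) F ⊗[F] Λ p.1 p.2) :
    emb F ψ p (u + v) = emb F ψ p u + emb F ψ p v := by
  simp [emb]

lemma elt_sub_left (X Y : Matrix (Fin (nopt n i)) (Fin (nopt n j)) F) (a : Λ i j) :
    elt F ψ i j (X - Y) a = elt F ψ i j X a - elt F ψ i j Y a := by
  simp [elt, emb, TensorProduct.sub_tmul]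

lemma elt_smul_left (c : F) (X : Matrix (Fin (nopt n i)) (Fin (nopt n j)) F) (a : Λ i j) :
    elt F ψ i j (c • X) a = c • elt F ψ i j X a := by
  simp [elt, emb, ← TensorProduct.smul_tmul']

lemma elt_sub_right (X : Matrix (Fin (nopt n i)) (Fin (nopt n j)) F) (a b : Λ i j) :
    elt F ψ i j X (a - b) = elt F ψ i j X a - elt F ψ i j X b := by
  simp [elt, emb, TensorProduct.tmul_sub]

end Linearity

lemma lieGens_subset_Lsub : lieGens F ψ ⊆ Lsub F ψ :=
  fun _ hx => Submodule.mem_sInf.2 fun _ hJ => hJ.1 hx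

lemma commutator_mem_Lsub {x y : A} (hx : x ∈ Lsub F ψ) (hy : y ∈ Lsub F ψ) :
    x * y - y * x ∈ Lsub F ψ :=
  Submodule.mem_sInf.2 fun J hJ =>
    hJ.2 x (Submodule.mem_sInf.1 hx J hJ) y (Submodule.mem_sInf.1 hy J hJ)

lemma elt_mem_Lsub_of_ne {i j : Option I} (hij : i ≠ j)
    (X : Matrix (Fin (nopt n i)) (Fin (nopt n j)) F) (a : Λ i j) :
    elt F ψ i j X a ∈ Lsub F ψ :=
  lieGens_subset_Lsub F ψ (Or.inl ⟨i, j, X, a, hij, rfl⟩)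

lemma elt_mem_Lsub_of_trace_eq_zero {i : I} {X : Matrix (Fin (n i)) (Fin (n i)) F}
    (hX : X.trace = 0) (a : Λ (some i) (some i)) : elt F ψ (some i) (some i) X a ∈ Lsub F ψ :=
  lieGens_subset_Lsub F ψ (Or.inr ⟨i, X, a, hX, rfl⟩)

lemma commutator_mem_Lsub_of_lieGens [SMulCommClass F A A] [IsScalarTower F A A]
    {e : A} (he : ∀ g ∈ lieGens F ψ, g * e - e * g ∈ Lsub F ψ) {x : A}
    (hx : x ∈ Lsub F ψ) :
    x * e - e * x ∈ Lsub F ψ := by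
  set L := Lsub F ψ
  let K : Submodule F A := L ⊓ L.comap (LinearMap.mulRight F e - LinearMap.mulLeft F e)
  have mem_K : ∀ y, y ∈ K ↔ y ∈ L ∧ y * e - e * y ∈ L := fun y => by
    simp [K]
  have hLK : L ≤ K := by
    refine sInf_le ⟨fun g hg => (mem_K g).2 ⟨lieGens_subset_Lsub F ψ hg, he g hg⟩, ?_⟩
    intro y hy z hz
    rw [mem_K] at hy hz ⊢
    have jacobi : (y * z - z * y) * e - e * (y * z - z * y)
        = (y * (z * e - e * z) - (z * e - e * z) * y)
          + ((y * e - e * y) * z - z * (y * e - e * y)) := by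
      noncomm_ring
    refine ⟨commutator_mem_Lsub F ψ hy.1 hz.1, jacobi ▸ add_mem ?_ ?_⟩
    · exact commutator_mem_Lsub F ψ hy.1 hz.2
    · exact commutator_mem_Lsub F ψ hy.2 hz.1
  exact ((mem_K x).1 (hLK hx)).2

section Generators

variable {mu ψ}

lemma elt_mul_elt_diag_mem_Lsub (hmul : BlockProduct F mu ψ) (hmul0 : BlockOrthogonal F ψ)
    {s t : Option I} (hst : s ≠ t) (X : Matrix (Fin (nopt n s)) (Fin (nopt n t)) F)
    (a : Λ s t) (k : Option I) (Y : Matrix (Fin (nopt n k)) (Fin (nopt n k)) F) (b : Λ k k) :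
    elt F ψ s t X a * elt F ψ k k Y b ∈ Lsub F ψ := by
  by_cases htk : t = k
  · subst htk
    rw [hmul]
    exact elt_mem_Lsub_of_ne F ψ hst _ _
  · rw [hmul0 _ _ _ _ htk]
    exact zero_mem _

lemma elt_diag_mul_elt_mem_Lsub (hmul : BlockProduct F mu ψ) (hmul0 : BlockOrthogonal F ψ)
    {s t : Option I} (hst : s ≠ t) (X : Matrix (Fin (nopt n s)) (Fin (nopt n t)) F)
    (a : Λ s t) (k : Option I) (Y : Matrix (Fin (nopt n k)) (Fin (nopt n k)) F) (b : Λ k k) :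
    elt F ψ k k Y b * elt F ψ s t X a ∈ Lsub F ψ := by
  by_cases hks : k = s
  · subst hks
    rw [hmul]
    exact elt_mem_Lsub_of_ne F ψ hst _ _
  · rw [hmul0 _ _ _ _ hks]
    exact zero_mem _

/-- `E_zz ⊗ [a, b] = [E_wz ⊗ a, E_zw ⊗ b] - (E_ww - E_zz) ⊗ ab`. -/
lemma elt_single_commutator_mem_Lsub (hmul : BlockProduct F mu ψ) {i : I} {z w : Fin (n i)}
    (hzw : z ≠ w) (a b : Λ (some i) (some i)) :
    elt F ψ (some i) (some i) (Matrix.single z z 1)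
      (mu _ _ _ a b - mu _ _ _ b a) ∈ Lsub F ψ := by
  have hbracket := commutator_mem_Lsub F ψ
    (elt_mem_Lsub_of_trace_eq_zero F ψ (Matrix.trace_single_eq_of_ne w z (1 : F) hzw.symm) a)
    (elt_mem_Lsub_of_trace_eq_zero F ψ (Matrix.trace_single_eq_of_ne z w (1 : F) hzw) b)
  have hdiag := elt_mem_Lsub_of_trace_eq_zero F ψ
    (X := Matrix.single w w 1 - Matrix.single z z 1) (by simp [Matrix.trace_sub])
    (mu _ _ _ a b)
  convert sub_mem hbracket hdiag using 1
  rw [hmul, hmul, Matrix.single_mul_single_same, Matrix.single_mul_single_same, one_mul,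
    elt_sub_left, elt_sub_right]
  abel

/-- With `c = tr XY = tr YX` and `E = E_zz`, the bracket `[X ⊗ a, Y ⊗ b]` equals
`(XY - cE) ⊗ ab - (YX - cE) ⊗ ba + c E ⊗ [a, b]`. -/
lemma elt_diag_commutator_mem_Lsub (hmul : BlockProduct F mu ψ) {i : I} (hi : 2 ≤ n i)
    (X Y : Matrix (Fin (n i)) (Fin (n i)) F) (a b : Λ (some i) (some i)) :
    elt F ψ (some i) (some i) X a * elt F ψ (some i) (some i) Y b
      - elt F ψ (some i) (some i) Y b * elt F ψ (some i) (some i) X a ∈ Lsub F ψ := by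
  let z : Fin (n i) := ⟨0, by omega⟩
  let w : Fin (n i) := ⟨1, by omega⟩
  set c := (X * Y).trace
  set E : Matrix (Fin (n i)) (Fin (n i)) F := Matrix.single z z 1
  have htrE : E.trace = 1 := Matrix.trace_single_eq_same _ _
  have hXY : (X * Y - c • E).trace = 0 := by simp [htrE, c]
  have hYX : (Y * X - c • E).trace = 0 := by simp [htrE, c, Matrix.trace_mul_comm Y]
  have hzw : z ≠ w := by simp [z, w]
  have hsplit := add_mem (sub_mem (elt_mem_Lsub_of_trace_eq_zero F ψ hXY (mu _ _ _ a b))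
      (elt_mem_Lsub_of_trace_eq_zero F ψ hYX (mu _ _ _ b a)))
    (Submodule.smul_mem _ c (elt_single_commutator_mem_Lsub F hmul hzw a b))
  convert hsplit using 1
  rw [hmul, hmul, elt_sub_left, elt_sub_left, elt_sub_right, elt_smul_left, elt_smul_left,
    smul_sub]
  abel

lemma lieGens_commutator_elt_mem_Lsub (hn : ∀ i : I, 2 ≤ n i) (hmul : BlockProduct F mu ψ)
    (hmul0 : BlockOrthogonal F ψ) {g : A} (hg : g ∈ lieGens F ψ) {i : I}
    (Y : Matrix (Fin (n i)) (Fin (n i)) F) (b : Λ (some i) (some i)) :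
    g * elt F ψ (some i) (some i) Y b - elt F ψ (some i) (some i) Y b * g ∈ Lsub F ψ := by
  rcases hg with ⟨s, t, X, a, hst, rfl⟩ | ⟨i', X, a, -, rfl⟩
  · exact sub_mem (elt_mul_elt_diag_mem_Lsub F hmul hmul0 hst X a _ Y b)
      (elt_diag_mul_elt_mem_Lsub F hmul hmul0 hst X a _ Y b)
  · by_cases hii : i' = i
    · subst hii
      exact elt_diag_commutator_mem_Lsub F hmul (hn i') X Y a b
    · have hne : some i' ≠ some i := Option.some_injective _ |>.ne hii
      rw [hmul0 _ _ _ _ hne, hmul0 _ _ _ _ hne.symm, sub_zero]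
      exact zero_mem _

end Generators

end

theorem commutator_Lsub_Vii_mem_Lsub
    -- sizes: `n_i ≥ 2`, and `n_i ≥ 3` in characteristic 2
    (hn2 : ∀ i : I, 2 ≤ n i)
    -- the product of `A`: `(X ⊗ λ)(Y ⊗ μ) = XY ⊗ λμ` for matching inner indices …
    (hmul : ∀ (i j k : Option I) (X : Matrix (Fin (nopt n i)) (Fin (nopt n j)) F)
      (a : Λ i j) (Y : Matrix (Fin (nopt n j)) (Fin (nopt n k)) F) (b : Λ j k),
      elt F ψ i j X a * elt F ψ j k Y b = elt F ψ i k (X * Y) (mu i j k a b))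
    -- … and `0` otherwise
    (hmul0 : ∀ (i j s t : Option I), j ≠ s →
      ∀ (X : Matrix (Fin (nopt n i)) (Fin (nopt n j)) F) (a : Λ i j)
        (Y : Matrix (Fin (nopt n s)) (Fin (nopt n t)) F) (b : Λ s t),
      elt F ψ i j X a * elt F ψ s t Y b = 0)
    :
    -- the commutator of any element of `L` with any element of `V_ii ⊗ Λ(i,i)` lies in `L`
    ∀ (i : I), ∀ x ∈ Lsub F ψ,
      ∀ u : Matrix (Fin (n i)) (Fin (n i)) F ⊗[F] Λ (some i) (some i),
      x * emb F ψ (some i, some i) u - emb F ψ (some i, some i) u * x ∈ Lsub F ψ := by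
  intro i x hx u
  refine commutator_mem_Lsub_of_lieGens F ψ (fun g hg => ?_) hx
  induction u using TensorProduct.induction_on with
  | zero => simp [emb_zero]
  | tmul Y b => exact lieGens_commutator_elt_mem_Lsub F hn2 hmul hmul0 hg Y b
  | add u v hu hv =>
    rw [emb_add]
    convert add_mem hu hv using 1
    noncomm_ring
end
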